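/- If A and A' are nonempty subsets of ℝ² such that the closure of A is a proper subset of A' (i.e., closure A ⊆ A' and there exists a point of A' not in closure A), then μ(A) < μ(A'). -/

import Mathlib

noncomputable section

/-- The plane with the Euclidean distance. -/
abbrev Plane : Type := EuclideanSpace ℝ (Fin 2)

/-- `m q i p = 1 / (1 + dist p (q i))`. -/
def m (q : ℕ → Plane) (i : ℕ) (p : Plane) : ℝ := 1 / (1 + dist p (q i))

/-- `μᵢ(A) = sup_{x,y ∈ A} |m_i x - m_i y|`. -/
def muI (q : ℕ → Plane) (i : ℕ) (A : Set Plane) : ℝ :=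
  sSup ((fun xy : Plane × Plane => |m q i xy.1 - m q i xy.2|) '' (A ×ˢ A))

/-- The Whitney function `μ(A) = Σ_i μᵢ(A) / 2^i`. -/
def mu (q : ℕ → Plane) (A : Set Plane) : ℝ := ∑' i : ℕ, muI q i A / 2 ^ i

lemma m_pos (q : ℕ → Plane) (i : ℕ) (p : Plane) : 0 < m q i p := by
  have := dist_nonneg (x := p) (y := q i)
  unfold m; positivity

lemma m_le_one (q : ℕ → Plane) (i : ℕ) (p : Plane) : m q i p ≤ 1 := by
  have h : (0:ℝ) ≤ dist p (q i) := dist_nonneg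
  rw [m, div_le_one (by linarith)]; linarith

lemma m_diff_abs_le_one (q : ℕ → Plane) (i : ℕ) (x y : Plane) :
    |m q i x - m q i y| ≤ 1 := by
  have h1 := m_pos q i x; have h2 := m_pos q i y
  have h3 := m_le_one q i x; have h4 := m_le_one q i y
  rw [abs_le]; constructor <;> linarith

lemma muI_bddAbove (q : ℕ → Plane) (i : ℕ) (A : Set Plane) :
    BddAbove ((fun xy : Plane × Plane => |m q i xy.1 - m q i xy.2|) '' (A ×ˢ A)) := by
  refine ⟨1, ?_⟩
  rintro z ⟨⟨x, y⟩, _, rfl⟩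
  exact m_diff_abs_le_one q i x y

lemma le_muI (q : ℕ → Plane) (i : ℕ) (A : Set Plane) {x y : Plane}
    (hx : x ∈ A) (hy : y ∈ A) : |m q i x - m q i y| ≤ muI q i A :=
  le_csSup (muI_bddAbove q i A) ⟨(x, y), ⟨hx, hy⟩, rfl⟩

lemma muI_nonneg (q : ℕ → Plane) (i : ℕ) {A : Set Plane} (hA : A.Nonempty) :
    0 ≤ muI q i A := by
  obtain ⟨a, ha⟩ := hA
  have := le_muI q i A ha ha
  simpa using this

lemma muI_le_one (q : ℕ → Plane) (i : ℕ) (A : Set Plane) : muI q i A ≤ 1 := by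
  apply Real.sSup_le _ zero_le_one
  rintro z ⟨⟨x, y⟩, _, rfl⟩
  exact m_diff_abs_le_one q i x y

lemma muI_mono (q : ℕ → Plane) (i : ℕ) {A A' : Set Plane} (hA : A.Nonempty)
    (h : A ⊆ A') : muI q i A ≤ muI q i A' := by
  obtain ⟨a, ha⟩ := hA
  refine csSup_le_csSup (muI_bddAbove q i A') ?_ (Set.image_mono (Set.prod_mono h h))
  exact ⟨_, Set.mem_image_of_mem _ (Set.mk_mem_prod ha ha)⟩

/-- Whitney's theorem, item (iv): strict monotonicity of `μ`. -/
theorem whitney_mu_strict_mono (q : ℕ → Plane) (hq : DenseRange q)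
    (A A' : Set Plane) (hA : A.Nonempty) (hA' : A'.Nonempty)
    (hsub : closure A ⊆ A') (hproper : ∃ x ∈ A', x ∉ closure A) :
    mu q A < mu q A' := by
  obtain ⟨x₀, hx₀A', hx₀⟩ := hproper
  -- get a radius r > 0 with ball x₀ r disjoint from closure A
  obtain ⟨r, hr, hball⟩ := Metric.isOpen_iff.mp isClosed_closure.isOpen_compl x₀ hx₀
  set ε : ℝ := r / 4 with hε
  have hεpos : 0 < ε := by positivity
  obtain ⟨i, hi⟩ := hq.exists_dist_lt x₀ hεpos
  -- distance facts
  have hdistA : ∀ a ∈ A, 3 * ε ≤ dist a (q i) := by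
    intro a haA
    have h1 : r ≤ dist a x₀ := by
      by_contra h
      push_neg at h
      exact hball (Metric.mem_ball.mpr h) (subset_closure haA)
    have h2 : dist a x₀ ≤ dist a (q i) + dist (q i) x₀ := dist_triangle a (q i) x₀
    have h3 : dist (q i) x₀ < ε := by rwa [dist_comm] at hi
    have : r = 4 * ε := by rw [hε]; ring
    linarith
  have hmx₀ : 1 / (1 + ε) ≤ m q i x₀ := by
    rw [m]
    apply one_div_le_one_div_of_le (by positivity)
    linarith
  have hmA : ∀ a ∈ A, m q i a ≤ 1 / (1 + 3 * ε) := by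
    intro a haA
    rw [m]
    apply one_div_le_one_div_of_le (by positivity)
    linarith [hdistA a haA]
  set c : ℝ := 1 / (1 + ε) - 1 / (1 + 3 * ε) with hc
  have hcpos : 0 < c := by
    rw [hc]
    have : (1:ℝ) / (1 + 3 * ε) < 1 / (1 + ε) := by
      apply one_div_lt_one_div_of_lt (by positivity)
      linarith
    linarith
  have hAsubA' : A ⊆ A' := subset_closure.trans hsub
  -- key: muI at index i increases by at least c
  have key : muI q i A + c ≤ muI q i A' := by
    rw [← le_sub_iff_add_le]
    have hbig : ∀ y ∈ A, 1 / (1 + ε) - m q i y ≤ muI q i A' := by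
      intro y hy
      have h1 : m q i x₀ - m q i y ≤ |m q i x₀ - m q i y| := le_abs_self _
      have h2 := le_muI q i A' hx₀A' (hAsubA' hy)
      linarith
    apply Real.sSup_le
    · rintro z ⟨⟨x, y⟩, ⟨hx, hy⟩, rfl⟩
      simp only
      have hx' := hmA x hx
      have hy' := hmA y hy
      rcases abs_cases (m q i x - m q i y) with ⟨h, _⟩ | ⟨h, _⟩ <;> rw [h]
      · have := hbig y hy
        rw [hc]; linarith
      · have := hbig x hx
        rw [hc]; linarith
    · obtain ⟨a, ha⟩ := hA
      have := hbig a ha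
      have := hmA a ha
      rw [hc]; linarith
  have hlt : muI q i A < muI q i A' := by linarith
  -- conclude via tsum comparison
  rw [mu, mu]
  apply Summable.tsum_lt_tsum_of_nonneg (i := i)
  · intro b
    have := muI_nonneg q b hA
    positivity
  · intro b
    gcongr
    exact muI_mono q b hA hAsubA'
  · exact (div_lt_div_iff_of_pos_right (by positivity)).mpr hlt
  · apply Summable.of_nonneg_of_le (fun n => ?_) (fun n => ?_) summable_geometric_two
    · have := muI_nonneg q n hA'
      positivity
    · have h1 := muI_le_one q n A'
      have h2 := muI_nonneg q n hA'
      rw [div_le_iff₀ (by positivity)]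
      calc muI q n A' ≤ 1 := h1
        _ = (1/2:ℝ)^n * 2^n := by rw [div_pow, one_pow, div_mul_cancel₀]; positivity
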